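/- Let T be a bounded operator on a Hilbert space, let E be a projection, and suppose T₁ = TE and T₂ = TE^⊥ satisfy Tⱼ*Tⱼ ≥ aⱼ² on ran E and ran E^⊥ respectively (a₁, a₂ > 0). Let λ = ‖P₁P₂‖ where Pⱼ is the range projection of Tⱼ. Then T*T ≥ (1 − λ) min(a₁², a₂²) I. -/

import Mathlib

/-!
Write `u = T E x`, `v = T E^⊥ x` and `λ = ‖P₁ P₂‖`. As `u ∈ ran P₁` and `v ∈ ran P₂`,
`|⟪u, v⟫| = |⟪u, P₁ P₂ v⟫| ≤ λ ‖u‖ ‖v‖ ≤ λ (‖u‖² + ‖v‖²) / 2`, so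
`‖T x‖² = ‖u + v‖² ≥ (1 - λ) (‖u‖² + ‖v‖²)`. The hypotheses give
`‖u‖² + ‖v‖² ≥ a₁² ‖E x‖² + a₂² ‖E^⊥ x‖² ≥ min(a₁², a₂²) ‖x‖²`, and `λ ≤ 1` since `P₁`, `P₂`
are contractions.
-/

variable {H : Type*} [NormedAddCommGroup H] [InnerProductSpace ℂ H] [CompleteSpace H]

/-- The orthogonal projection onto the closure of the range of a bounded operator. -/
noncomputable def rangeProj (T : H →L[ℂ] H) : H →L[ℂ] H :=
  (LinearMap.range (T : H →ₗ[ℂ] H)).topologicalClosure.subtypeL ∘L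
    (LinearMap.range (T : H →ₗ[ℂ] H)).topologicalClosure.orthogonalProjectionOnto

open ContinuousLinearMap RCLike
open scoped InnerProductSpace

lemma one_sub_mul_add_sq_le_norm_add_sq {𝕜 V : Type*} [RCLike 𝕜] [NormedAddCommGroup V]
    [InnerProductSpace 𝕜 V] {u v : V} {l : ℝ} (hl : 0 ≤ l)
    (huv : ‖⟪u, v⟫_𝕜‖ ≤ l * (‖u‖ * ‖v‖)) :
    (1 - l) * (‖u‖ ^ 2 + ‖v‖ ^ 2) ≤ ‖u + v‖ ^ 2 := by
  have hre : -(l * (‖u‖ * ‖v‖)) ≤ re ⟪u, v⟫_𝕜 :=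
    neg_le_of_abs_le ((abs_re_le_norm _).trans huv)
  rw [norm_add_sq (𝕜 := 𝕜)]
  nlinarith [mul_nonneg hl (sq_nonneg (‖u‖ - ‖v‖))]

lemma smul_star_mul_self_le_star_mul_self_iff (a : ℝ) (A B : H →L[ℂ] H) :
    a • (star A * A) ≤ star B * B ↔ ∀ x, a * ‖A x‖ ^ 2 ≤ ‖B x‖ ^ 2 := by
  have hsa : IsSelfAdjoint (star B * B - a • (star A * A)) :=
    (IsSelfAdjoint.star_mul_self B).sub ((IsSelfAdjoint.all a).smul (.star_mul_self A))
  have hquad : ∀ x, (star B * B - a • (star A * A)).reApplyInnerSelf x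
      = ‖B x‖ ^ 2 - a * ‖A x‖ ^ 2 := by
    intro x
    rw [reApplyInnerSelf_apply, sub_apply, inner_sub_left, map_sub, smul_apply,
      real_smul_eq_coe_smul (K := ℂ), inner_smul_real_left, smul_re, star_eq_adjoint,
      star_eq_adjoint, apply_norm_sq_eq_inner_adjoint_left, apply_norm_sq_eq_inner_adjoint_left]
    rfl
  simp only [le_def, isPositive_def', hsa, true_and, hquad, sub_nonneg]

lemma smul_one_le_star_mul_self_iff (a : ℝ) (B : H →L[ℂ] H) :
    a • 1 ≤ star B * B ↔ ∀ x, a * ‖x‖ ^ 2 ≤ ‖B x‖ ^ 2 := by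
  simpa using smul_star_mul_self_le_star_mul_self_iff a 1 B

namespace IsStarProjection

variable {p : H →L[ℂ] H}

lemma norm_sq_add_norm_sq_one_sub (hp : IsStarProjection p) (x : H) :
    ‖p x‖ ^ 2 + ‖(1 - p) x‖ ^ 2 = ‖x‖ ^ 2 := by
  have hsum : star p * p + star (1 - p) * (1 - p) = 1 := by
    rw [hp.isSelfAdjoint.star_eq, hp.one_sub.isSelfAdjoint.star_eq, hp.isIdempotentElem.eq,
      hp.one_sub.isIdempotentElem.eq, add_sub_cancel]
  simp only [apply_norm_sq_eq_inner_adjoint_left, ← map_add, ← inner_add_left, ← add_apply,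
    ← star_eq_adjoint]
  rw [← mul_def, ← mul_def, hsum, one_apply_eq_self, inner_self_eq_norm_sq (𝕜 := ℂ)]

lemma smul_le_mul_star_mul_self_mul_iff (hp : IsStarProjection p) (a : ℝ) (T : H →L[ℂ] H) :
    a • p ≤ p * (star T * T) * p ↔ ∀ x, a * ‖p x‖ ^ 2 ≤ ‖T (p x)‖ ^ 2 := by
  have hp' : p = star p * p := by rw [hp.isSelfAdjoint.star_eq, hp.isIdempotentElem.eq]
  have hconj : p * (star T * T) * p = star (T * p) * (T * p) := by
    rw [star_mul, hp.isSelfAdjoint.star_eq, mul_assoc, mul_assoc, mul_assoc]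
  rw [hconj]
  nth_rw 1 [hp']
  exact smul_star_mul_self_le_star_mul_self_iff a p (T * p)

end IsStarProjection

lemma isStarProjection_rangeProj (T : H →L[ℂ] H) : IsStarProjection (rangeProj T) :=
  isStarProjection_starProjection

lemma rangeProj_apply_apply (T : H →L[ℂ] H) (x : H) : rangeProj T (T x) = T x :=
  Submodule.starProjection_eq_self_iff.mpr
    (Submodule.le_topologicalClosure _ (LinearMap.mem_range_self (T : H →ₗ[ℂ] H) x))

lemma norm_rangeProj_mul_rangeProj_le_one (A B : H →L[ℂ] H) :
    ‖rangeProj A * rangeProj B‖ ≤ 1 :=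
  (norm_mul_le _ _).trans <| mul_le_one₀ ((isStarProjection_rangeProj A).norm_le _)
    (norm_nonneg _) ((isStarProjection_rangeProj B).norm_le _)

lemma norm_inner_le_norm_rangeProj_mul (A B : H →L[ℂ] H) (x y : H) :
    ‖⟪A x, B y⟫_ℂ‖ ≤ ‖rangeProj A * rangeProj B‖ * (‖A x‖ * ‖B y‖) := by
  have hinner : ⟪A x, B y⟫_ℂ = ⟪A x, rangeProj A (rangeProj B (B y))⟫_ℂ :=
    calc ⟪A x, B y⟫_ℂ = ⟪rangeProj A (A x), rangeProj B (B y)⟫_ℂ := by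
          rw [rangeProj_apply_apply, rangeProj_apply_apply]
      _ = ⟪A x, rangeProj A (rangeProj B (B y))⟫_ℂ :=
          (isStarProjection_rangeProj A).isSelfAdjoint.isSymmetric _ _
  calc ‖⟪A x, B y⟫_ℂ‖ ≤ ‖A x‖ * ‖rangeProj A (rangeProj B (B y))‖ :=
        hinner ▸ norm_inner_le_norm _ _
    _ ≤ ‖A x‖ * (‖rangeProj A * rangeProj B‖ * ‖B y‖) := by
        gcongr; exact le_opNorm (rangeProj A * rangeProj B) (B y)
    _ = ‖rangeProj A * rangeProj B‖ * (‖A x‖ * ‖B y‖) := by ring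

theorem stmt9_general (T E : H →L[ℂ] H)
    (hEsa : IsSelfAdjoint E) (hEidem : IsIdempotentElem E)
    (a₁ a₂ : ℝ)
    (h1 : a₁ ^ 2 • E ≤ E * (star T * T) * E)
    (h2 : a₂ ^ 2 • (1 - E) ≤ (1 - E) * (star T * T) * (1 - E)) :
    ((1 - ‖rangeProj (T * E) * rangeProj (T * (1 - E))‖) * min (a₁ ^ 2) (a₂ ^ 2)) •
        (1 : H →L[ℂ] H) ≤ star T * T := by
  have hE : IsStarProjection E := ⟨hEidem, hEsa⟩
  have hTE := (hE.smul_le_mul_star_mul_self_mul_iff _ T).1 h1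
  have hTF := (hE.one_sub.smul_le_mul_star_mul_self_mul_iff _ T).1 h2
  set l := ‖rangeProj (T * E) * rangeProj (T * (1 - E))‖
  have hl : 0 ≤ 1 - l := sub_nonneg.2 (norm_rangeProj_mul_rangeProj_le_one _ _)
  set m := min (a₁ ^ 2) (a₂ ^ 2)
  refine (smul_one_le_star_mul_self_iff _ T).2 fun x => ?_
  calc (1 - l) * m * ‖x‖ ^ 2 = (1 - l) * (m * ‖E x‖ ^ 2 + m * ‖(1 - E) x‖ ^ 2) := by
        rw [← hE.norm_sq_add_norm_sq_one_sub x]; ring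
    _ ≤ (1 - l) * (‖T (E x)‖ ^ 2 + ‖T ((1 - E) x)‖ ^ 2) := by
        gcongr
        · exact (mul_le_mul_of_nonneg_right (min_le_left _ _) (sq_nonneg _)).trans (hTE x)
        · exact (mul_le_mul_of_nonneg_right (min_le_right _ _) (sq_nonneg _)).trans (hTF x)
    _ ≤ ‖T (E x) + T ((1 - E) x)‖ ^ 2 :=
        one_sub_mul_add_sq_le_norm_add_sq (norm_nonneg _)
          (norm_inner_le_norm_rangeProj_mul (T * E) (T * (1 - E)) x x)
    _ = ‖T x‖ ^ 2 := by rw [← map_add, sub_apply, one_apply_eq_self, add_sub_cancel]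

/-- If `E T* T E ≥ a₁² E` and `E^⊥ T* T E^⊥ ≥ a₂² E^⊥`, and `λ = ‖P₁ P₂‖` where `P₁`,
`P₂` are the range projections of `T E` and `T E^⊥`, then
`T* T ≥ (1 - λ) min(a₁², a₂²) • 1`. -/
theorem stmt9 (T E : H →L[ℂ] H)
    (hEsa : IsSelfAdjoint E) (hEidem : IsIdempotentElem E)
    (a₁ a₂ : ℝ) (ha₁ : 0 < a₁) (ha₂ : 0 < a₂)
    (h1 : a₁ ^ 2 • E ≤ E * (star T * T) * E)
    (h2 : a₂ ^ 2 • (1 - E) ≤ (1 - E) * (star T * T) * (1 - E)) :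
    ((1 - ‖rangeProj (T * E) * rangeProj (T * (1 - E))‖) * min (a₁ ^ 2) (a₂ ^ 2)) •
        (1 : H →L[ℂ] H) ≤ star T * T :=
  stmt9_general T E hEsa hEidem a₁ a₂ h1 h2
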